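/- arXiv:2002.06442 — 4 statements merged into one kernel-verified Lean document; each statement's English description precedes it below -/
import Mathlib

section
/- Let U be a finite linearly ordered set and let x, y be nonempty subsets of U. If π is a permutation of U chosen uniformly at random, then the probability that min_{e ∈ x} π(e) = min_{e ∈ y} π(e) equals |x ∩ y| / |x ∪ y|, the Jaccard similarity of x and y. -/
/-!
Let `s = x ∪ y` and let `argminOn s π` be the element of `s` at which `π` is smallest. The minima
of `π` over `x` and over `y` agree exactly when this element lies in `x ∩ y`, since the minimum
over `s` is the smaller of the two. Right multiplication by the transposition `swap a b` (`a, b ∈ s`)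
leaves `π '' s` unchanged and exchanges the fibres of `argminOn s` over `a` and `b`, so the
argmin is uniformly distributed on `s` and lands in `x ∩ y` with probability `|x ∩ y| / |s|`.
-/

open Finset Equiv

namespace Minhash

theorem image_swap_eq_self {α : Type*} [DecidableEq α] {s : Finset α} {a b : α} (ha : a ∈ s)
    (hb : b ∈ s) : s.image (swap a b) = s :=
  coe_injective <| by simpa using (swap_bijOn_self (iff_of_true ha hb)).image_eq

variable {U : Type*} [LinearOrder U]

def argminOn (s : Finset U) (hs : s.Nonempty) (π : Perm U) : U :=
  π.symm ((s.image π).min' (hs.image _))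

section argminOn

variable {s : Finset U} (hs : s.Nonempty) (π : Perm U)

theorem argminOn_mem : argminOn s hs π ∈ s := by
  obtain ⟨e, he, hπe⟩ := mem_image.mp ((s.image π).min'_mem (hs.image _))
  simpa [argminOn, ← hπe] using he

theorem argminOn_mem_iff {t : Finset U} (ht : t.Nonempty) (hts : t ⊆ s) :
    argminOn s hs π ∈ t ↔ (t.image π).min' (ht.image _) = (s.image π).min' (hs.image _) := by
  constructor
  · intro hmem
    refine le_antisymm (min'_le _ _ ?_) (min'_subset _ (image_subset_image hts))
    simpa [argminOn] using mem_image_of_mem π hmem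
  · intro heq
    obtain ⟨e, he, hπe⟩ := mem_image.mp ((t.image π).min'_mem (ht.image _))
    simpa [argminOn, ← heq, ← hπe] using he

theorem argminOn_mul {σ : Perm U} (hσ : s.image σ = s) :
    argminOn s hs (π * σ) = σ.symm (argminOn s hs π) := by
  have himage : s.image (π * σ) = s.image π := by
    rw [Perm.coe_mul, ← image_image, hσ]
  simp only [argminOn, himage]
  rfl

theorem min'_image_eq_iff_argminOn_union_mem_inter {x y : Finset U}
    (hx : x.Nonempty) (hy : y.Nonempty) :
    (x.image π).min' (hx.image _) = (y.image π).min' (hy.image _) ↔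
      argminOn (x ∪ y) (hx.mono subset_union_left) π ∈ x ∩ y := by
  have hmin : ((x ∪ y).image π).min' ((hx.mono subset_union_left).image _) =
      (x.image π).min' (hx.image _) ⊓ (y.image π).min' (hy.image _) := by
    simp only [image_union]
    exact min'_union _ _
  rw [mem_inter, argminOn_mem_iff _ _ hx subset_union_left,
    argminOn_mem_iff _ _ hy subset_union_right, hmin]
  constructor
  · intro h
    simp [h]
  · rintro ⟨hx', hy'⟩
    exact hx'.trans hy'.symm

end argminOn

variable [Fintype U] {s : Finset U} (hs : s.Nonempty)

theorem card_argminOn_fiber_eq {a b : U} (ha : a ∈ s) (hb : b ∈ s) :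
    #{π | argminOn s hs π = a} = #{π | argminOn s hs π = b} := by
  have hswap : s.image (swap a b) = s := image_swap_eq_self ha hb
  refine card_nbij' (· * swap a b) (· * swap a b) ?_ ?_ ?_ ?_ <;> intro π hπ <;>
    simp_all [argminOn_mul, mul_assoc]

theorem card_argminOn_fiber_mul_card {e : U} (he : e ∈ s) :
    #{π | argminOn s hs π = e} * #s = Fintype.card (Perm U) := by
  rw [← card_univ, card_eq_sum_card_fiberwise (s := univ) (f := argminOn s hs) (t := s)
    (fun π _ => argminOn_mem hs π), sum_const_nat (fun b hb => card_argminOn_fiber_eq hs hb he),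
    mul_comm]

theorem card_argminOn_mem_mul_card {t : Finset U} (hts : t ⊆ s) :
    #{π | argminOn s hs π ∈ t} * #s = #t * Fintype.card (Perm U) := by
  rw [← sum_card_fiberwise_eq_card_filter, sum_mul,
    sum_const_nat (fun e he => card_argminOn_fiber_mul_card hs (hts he))]

end Minhash

open Minhash in
/-- Minwise hashing: for a uniformly random permutation `π` of a finite
linearly ordered universe `U`, the probability (as a ratio of counts) that the
minima of the images of two nonempty sets `x` and `y` under `π` coincide
equals the Jaccard similarity `|x ∩ y| / |x ∪ y|`. -/
theorem minhash_collision_probability {U : Type*} [Fintype U] [LinearOrder U]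
    (x y : Finset U) (hx : x.Nonempty) (hy : y.Nonempty) :
    ((Finset.univ.filter fun π : Equiv.Perm U =>
        (x.image π).min' (hx.image _) = (y.image π).min' (hy.image _)).card : ℝ) /
      (Fintype.card (Equiv.Perm U) : ℝ)
      = ((x ∩ y).card : ℝ) / ((x ∪ y).card : ℝ) := by
  have hs : (x ∪ y).Nonempty := hx.mono subset_union_left
  have hevent : (univ.filter fun π : Perm U =>
        (x.image π).min' (hx.image _) = (y.image π).min' (hy.image _)) =
      univ.filter fun π => argminOn (x ∪ y) hs π ∈ x ∩ y :=
    filter_congr fun π _ => min'_image_eq_iff_argminOn_union_mem_inter π hx hy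
  have hperm : (Fintype.card (Perm U) : ℝ) ≠ 0 := by positivity
  have hunion : ((x ∪ y).card : ℝ) ≠ 0 := by simpa using hs.ne_empty
  rw [hevent, div_eq_div_iff hperm hunion]
  exact_mod_cast card_argminOn_mem_mul_card hs inter_subset_union
end

section
/- Let r > 0 and let u, v ∈ ℝ with |u − v| ≤ r. If b is a random variable uniformly distributed on the interval [0, r], then the probability that ⌊(u + b)/r⌋ = ⌊(v + b)/r⌋ equals 1 − |u − v| / r. -/
/-!
The collision set is invariant under `b ↦ b + r`, so its measure in a window of length `r` does
not depend on the window: it is the measure of its image in the circle `ℝ ⧸ rℤ`. On the window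
`[-v, r - v)` the floor of `(v + b) / r` vanishes, and for `v ≤ u` the floor of `(u + b) / r`
vanishes exactly when `b < r - u`, which leaves measure `r - (u - v)`.
-/
open MeasureTheory ProbabilityTheory Set Filter

theorem Function.Periodic.volume_inter_Ioc_eq {T : ℝ} (hT : 0 < T) {S : Set ℝ}
    (hS : MeasurableSet S) (hper : Function.Periodic (· ∈ S) T) (s t : ℝ) :
    volume (S ∩ Ioc s (s + T)) = volume (S ∩ Ioc t (t + T)) := by
  have := Fact.mk hT
  have hU : MeasurableSet {x : AddCircle T | hper.lift x} := hS
  exact (AddCircle.add_projection_respects_measure T s hU).symm.trans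
    (AddCircle.add_projection_respects_measure T t hU)

section FloorCollision

variable {r : ℝ} (u v : ℝ)

lemma measurableSet_setOf_floor_div_eq :
    MeasurableSet {b : ℝ | ⌊(u + b) / r⌋ = ⌊(v + b) / r⌋} :=
  measurableSet_eq_fun (by fun_prop) (by fun_prop)

lemma periodic_mem_floor_div_eq (hr : r ≠ 0) :
    Function.Periodic (· ∈ {b : ℝ | ⌊(u + b) / r⌋ = ⌊(v + b) / r⌋}) r := by
  intro b
  have shift (w : ℝ) : (w + (b + r)) / r = (w + b) / r + 1 := by field_simp; ring
  simp only [mem_ofPred_eq, shift, Int.floor_add_one, add_left_inj]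

lemma setOf_floor_div_eq_inter_Ico {u v} (hr : 0 < r) (hvu : v ≤ u) :
    {b : ℝ | ⌊(u + b) / r⌋ = ⌊(v + b) / r⌋} ∩ Ico (-v) (-v + r) = Ico (-v) (r - u) := by
  ext b
  simp only [mem_inter_iff, mem_ofPred_eq, mem_Ico]
  by_cases hb : -v ≤ b ∧ b < -v + r
  · have hv : ⌊(v + b) / r⌋ = 0 :=
      Int.floor_eq_zero_iff.2 ⟨div_nonneg (by linarith) hr.le, (div_lt_one hr).2 (by linarith)⟩
    have hu : 0 ≤ (u + b) / r := div_nonneg (by linarith) hr.le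
    rw [hv, Int.floor_eq_zero_iff, mem_Ico, div_lt_one hr]
    constructor
    · rintro ⟨⟨-, hub⟩, hb⟩
      exact ⟨hb.1, by linarith⟩
    · rintro ⟨-, hub⟩
      exact ⟨⟨hu, by linarith⟩, hb⟩
  · exact iff_of_false (fun h ↦ hb h.2) (fun h ↦ hb ⟨h.1, by linarith [h.2]⟩)

lemma volume_setOf_floor_div_eq_inter_Icc (hr : 0 < r) :
    volume ({b : ℝ | ⌊(u + b) / r⌋ = ⌊(v + b) / r⌋} ∩ Icc 0 r) = ENNReal.ofReal (r - |u - v|) := by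
  wlog hvu : v ≤ u generalizing u v
  · have hswap :
        {b : ℝ | ⌊(u + b) / r⌋ = ⌊(v + b) / r⌋} = {b | ⌊(v + b) / r⌋ = ⌊(u + b) / r⌋} :=
      ext fun _ ↦ eq_comm
    rw [hswap, abs_sub_comm]
    exact this v u (by linarith)
  rw [abs_of_nonneg (sub_nonneg.2 hvu)]
  set S := {b : ℝ | ⌊(u + b) / r⌋ = ⌊(v + b) / r⌋}
  calc volume (S ∩ Icc 0 r) = volume (S ∩ Ioc 0 (0 + r)) := by
        rw [zero_add]; exact measure_congr ((EventuallyEq.refl _ _).inter Ioc_ae_eq_Icc.symm)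
    _ = volume (S ∩ Ioc (-v) (-v + r)) :=
        (periodic_mem_floor_div_eq u v hr.ne').volume_inter_Ioc_eq hr
          (measurableSet_setOf_floor_div_eq u v) _ _
    _ = volume (S ∩ Ico (-v) (-v + r)) :=
        measure_congr ((EventuallyEq.refl _ _).inter Ico_ae_eq_Ioc.symm)
    _ = ENNReal.ofReal (r - (u - v)) := by
        rw [setOf_floor_div_eq_inter_Ico hr hvu, Real.volume_Ico]; ring_nf

end FloorCollision

theorem uniform_offset_floor_collision_general (r u v : ℝ) (hr : 0 < r) :
    ProbabilityTheory.cond volume (Set.Icc (0 : ℝ) r)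
        {b : ℝ | ⌊(u + b) / r⌋ = ⌊(v + b) / r⌋}
      = ENNReal.ofReal (1 - |u - v| / r) := by
  rw [cond_apply measurableSet_Icc, inter_comm, volume_setOf_floor_div_eq_inter_Icc u v hr,
    Real.volume_Icc, sub_zero, ← ENNReal.div_eq_inv_mul, ← ENNReal.ofReal_div_of_pos hr,
    sub_div, div_self hr.ne']

/-- Collision probability of the uniform offset in p-stable LSH: if `b` is
uniformly distributed on `[0, r]` (Lebesgue measure conditioned on `[0, r]`)
and `|u − v| ≤ r`, then the probability that `⌊(u + b)/r⌋ = ⌊(v + b)/r⌋`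
equals `1 − |u − v| / r`. -/
theorem uniform_offset_floor_collision (r u v : ℝ) (hr : 0 < r) (huv : |u - v| ≤ r) :
    ProbabilityTheory.cond volume (Set.Icc (0 : ℝ) r)
        {b : ℝ | ⌊(u + b) / r⌋ = ⌊(v + b) / r⌋}
      = ENNReal.ofReal (1 - |u - v| / r) :=
  uniform_offset_floor_collision_general r u v hr
end

section
/- For all real numbers r > 0 and θ > 0, ∫_0^r (2/(θ·√(2π))) · e^{−t²/(2θ²)} · (1 − t/r) dt = 1 − 2·Φ(−r/θ) − (2θ/(√(2π)·r)) · (1 − e^{−r²/(2θ²)}), where Φ denotes the cumulative distribution function of the standard normal distribution N(0,1). -/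
/-!
Split `1 - t / r`. The constant part is a Gaussian density which, after the substitution
`s = t / θ`, integrates to `2 (Φ(r/θ) - Φ(0)) = 1 - 2 Φ(-r/θ)` by the symmetry `Φ(-x) = 1 - Φ(x)`
of the standard normal law. The part linear in `t` has the explicit antiderivative
`-θ² e^{-t²/(2θ²)}`.
-/

/-- The cumulative distribution function `Φ` of the standard normal
distribution `N(0, 1)`. -/
noncomputable def stdNormalCDF (x : ℝ) : ℝ :=
  ((ProbabilityTheory.gaussianReal 0 1) (Set.Iic x)).toReal

open MeasureTheory ProbabilityTheory Real Set

lemma gaussianPDFReal_zero_one (x : ℝ) :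
    gaussianPDFReal 0 1 x = (√(2 * π))⁻¹ * exp (-x ^ 2 / 2) := by
  simp [gaussianPDFReal]

lemma stdNormalCDF_eq_measureReal (x : ℝ) : stdNormalCDF x = (gaussianReal 0 1).real (Iic x) :=
  rfl

lemma stdNormalCDF_neg (x : ℝ) : stdNormalCDF (-x) = 1 - stdNormalCDF x := by
  have hsymm : (gaussianReal 0 1).real (Iic (-x)) = (gaussianReal 0 1).real (Ioi x) := by
    have hmap := congrArg (fun μ : Measure ℝ => μ.real (Iic (-x)))
      (gaussianReal_map_neg (μ := 0) (v := 1))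
    simp only [neg_zero] at hmap
    rw [← hmap, map_measureReal_apply measurable_neg measurableSet_Iic, neg_preimage, neg_Iic,
      neg_neg]
    have : NullSingletonClass (gaussianReal 0 1) := nullSingletonClass_gaussianReal one_ne_zero
    exact measureReal_congr Ioi_ae_eq_Ici.symm
  rw [stdNormalCDF_eq_measureReal, stdNormalCDF_eq_measureReal, hsymm, ← compl_Iic,
    probReal_compl_eq_one_sub measurableSet_Iic]

lemma stdNormalCDF_zero : stdNormalCDF 0 = 1 / 2 := by
  have := stdNormalCDF_neg 0
  rw [neg_zero] at this
  linarith

lemma stdNormalCDF_eq_integral (x : ℝ) :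
    stdNormalCDF x = ∫ y in Iic x, gaussianPDFReal 0 1 y := by
  rw [stdNormalCDF, gaussianReal_apply_eq_integral 0 one_ne_zero,
    ENNReal.toReal_ofReal (integral_nonneg (gaussianPDFReal_nonneg 0 1))]

lemma stdNormalCDF_sub_stdNormalCDF (a b : ℝ) :
    stdNormalCDF b - stdNormalCDF a = ∫ y in a..b, gaussianPDFReal 0 1 y := by
  rw [stdNormalCDF_eq_integral, stdNormalCDF_eq_integral]
  exact intervalIntegral.integral_Iic_sub_Iic (integrable_gaussianPDFReal 0 1).integrableOn
    (integrable_gaussianPDFReal 0 1).integrableOn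

lemma one_sub_two_mul_stdNormalCDF_neg (a : ℝ) :
    1 - 2 * stdNormalCDF (-a) = 2 / √(2 * π) * ∫ s in (0 : ℝ)..a, exp (-s ^ 2 / 2) := by
  have hhalf : 1 - 2 * stdNormalCDF (-a) = 2 * (stdNormalCDF a - stdNormalCDF 0) := by
    rw [stdNormalCDF_neg, stdNormalCDF_zero]
    ring
  simp_rw [hhalf, stdNormalCDF_sub_stdNormalCDF, gaussianPDFReal_zero_one,
    intervalIntegral.integral_const_mul]
  ring

lemma integral_exp_neg_sq_div_two_mul_sq {θ : ℝ} (hθ : θ ≠ 0) (a b : ℝ) :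
    ∫ t in a..b, exp (-t ^ 2 / (2 * θ ^ 2)) = θ * ∫ s in a / θ..b / θ, exp (-s ^ 2 / 2) := by
  have hrescale : ∀ t, exp (-t ^ 2 / (2 * θ ^ 2)) = exp (-(t / θ) ^ 2 / 2) := fun t => by
    congr 1
    field_simp
  simp_rw [hrescale]
  exact intervalIntegral.integral_comp_div (fun s => exp (-s ^ 2 / 2)) hθ

lemma integral_mul_exp_neg_sq_div {c : ℝ} (hc : c ≠ 0) (a b : ℝ) :
    ∫ t in a..b, t * exp (-t ^ 2 / c) = c / 2 * (exp (-a ^ 2 / c) - exp (-b ^ 2 / c)) := by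
  have hderiv : ∀ t, HasDerivAt (fun t => -(c / 2) * exp (-t ^ 2 / c)) (t * exp (-t ^ 2 / c)) t := by
    intro t
    have hexponent : HasDerivAt (fun t => -t ^ 2 / c) (-(2 * t) / c) t := by
      simpa using (hasDerivAt_pow 2 t).neg.div_const c
    refine (hexponent.exp.const_mul _).congr_deriv ?_
    field_simp
  rw [intervalIntegral.integral_eq_sub_of_hasDerivAt (fun t _ => hderiv t)
    (Continuous.intervalIntegrable (by fun_prop) _ _)]
  ring

/-- Closed form of the p-stable LSH collision-probability integral:
`∫_0^r (2/(θ√(2π))) e^{−t²/(2θ²)} (1 − t/r) dt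
  = 1 − 2Φ(−r/θ) − (2θ/(√(2π) r))(1 − e^{−r²/(2θ²)})`. -/
theorem collision_probability_integral (r θ : ℝ) (hr : 0 < r) (hθ : 0 < θ) :
    ∫ t in (0 : ℝ)..r,
        (2 / (θ * Real.sqrt (2 * Real.pi))) * Real.exp (-t ^ 2 / (2 * θ ^ 2)) * (1 - t / r)
      = 1 - 2 * stdNormalCDF (-r / θ)
        - (2 * θ / (Real.sqrt (2 * Real.pi) * r)) * (1 - Real.exp (-r ^ 2 / (2 * θ ^ 2))) := by
  have hsplit : ∀ t, 2 / (θ * √(2 * π)) * exp (-t ^ 2 / (2 * θ ^ 2)) * (1 - t / r)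
      = 2 / (θ * √(2 * π)) * exp (-t ^ 2 / (2 * θ ^ 2))
        - 2 / (θ * √(2 * π)) / r * (t * exp (-t ^ 2 / (2 * θ ^ 2))) := fun t => by ring
  simp_rw [hsplit]
  rw [intervalIntegral.integral_sub (Continuous.intervalIntegrable (by fun_prop) _ _)
    (Continuous.intervalIntegrable (by fun_prop) _ _), intervalIntegral.integral_const_mul,
    intervalIntegral.integral_const_mul, integral_exp_neg_sq_div_two_mul_sq hθ.ne',
    integral_mul_exp_neg_sq_div (by positivity), neg_div θ r, one_sub_two_mul_stdNormalCDF_neg]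
  norm_num only [zero_div, zero_pow, neg_zero, exp_zero]
  field_simp
end

section
/- Let n ∈ ℕ, let x, y ∈ ℝ^n with x ≠ y, let θ = ‖x − y‖₂, and let r > 0. Let a ∈ ℝ^n have entries drawn independently from the standard normal distribution N(0,1), and let b be uniform on [0, r], independent of a. Then the probability that ⌊(a·x + b)/r⌋ = ⌊(a·y + b)/r⌋ equals ε(θ) = 1 − 2·Φ(−r/θ) − (2θ/(√(2π)·r)) · (1 − e^{−r²/(2θ²)}), where Φ is the cumulative distribution function of the standard normal distribution N(0,1). -/
/-!
Fix `a`. The two hash values agree iff no point of `r ℤ - b` separates `a·x` and `a·y`;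
since `b` is uniform over a full period of `r ℤ`, this has probability `(1 - |a·(x - y)|/r)⁺`.
The functional `a ↦ a·(x - y)` of the standard Gaussian vector is `N(0, θ²)`, so the collision
probability is `E[(1 - |T|/r)⁺]` for `T = θ Z`, `Z ∼ N(0, 1)`. With `ρ = r/θ` this is
`P(|Z| ≤ ρ) - E[|Z|; |Z| ≤ ρ]/ρ = 1 - 2Φ(-ρ) - 2(φ(0) - φ(ρ))/ρ`, the last step because
`z φ(z) = -φ'(z)`.
-/

open MeasureTheory ProbabilityTheory

/-- The collision probability `ε(θ)` of a single p-stable LSH hash of two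
points at Euclidean distance `θ`, with bucket width `r`. -/
noncomputable def collisionProb (r θ : ℝ) : ℝ :=
  1 - 2 * stdNormalCDF (-r / θ)
    - (2 * θ / (Real.sqrt (2 * Real.pi) * r)) * (1 - Real.exp (-r ^ 2 / (2 * θ ^ 2)))

open Set Real

lemma hasDerivAt_gaussianPDFReal (μ : ℝ) (v : NNReal) (x : ℝ) :
    HasDerivAt (gaussianPDFReal μ v) (-((x - μ) / v) * gaussianPDFReal μ v x) x := by
  rw [gaussianPDFReal_def]
  refine ((((hasDerivAt_id' x).sub_const μ).fun_pow 2).fun_neg.div_const _).exp.const_mul _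
    |>.congr_deriv ?_
  ring

lemma continuous_gaussianPDFReal (μ : ℝ) (v : NNReal) : Continuous (gaussianPDFReal μ v) :=
  continuous_iff_continuousAt.2 fun x => (hasDerivAt_gaussianPDFReal μ v x).continuousAt

lemma gaussianPDFReal_zero_neg (v : NNReal) (x : ℝ) :
    gaussianPDFReal 0 v (-x) = gaussianPDFReal 0 v x := by
  simp [gaussianPDFReal_def]

lemma integral_sub_mul_gaussianPDFReal (μ : ℝ) {v : NNReal} (hv : v ≠ 0) (a b : ℝ) :
    ∫ x in a..b, (x - μ) * gaussianPDFReal μ v x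
      = v * (gaussianPDFReal μ v a - gaussianPDFReal μ v b) := by
  have hderiv : ∀ x, HasDerivAt (fun x => -(v * gaussianPDFReal μ v x))
      ((x - μ) * gaussianPDFReal μ v x) x := fun x =>
    ((hasDerivAt_gaussianPDFReal μ v x).const_mul (v : ℝ)).neg.congr_deriv (by field_simp)
  rw [intervalIntegral.integral_eq_sub_of_hasDerivAt (fun x _ => hderiv x)
    (((continuous_id.sub continuous_const).mul
      (continuous_gaussianPDFReal μ v)).intervalIntegrable _ _)]
  ring

lemma setIntegral_gaussianReal_eq_setIntegral_mul (μ : ℝ) {v : NNReal} (hv : v ≠ 0)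
    (f : ℝ → ℝ) {s : Set ℝ} (hs : MeasurableSet s) :
    ∫ x in s, f x ∂gaussianReal μ v = ∫ x in s, gaussianPDFReal μ v x * f x := by
  rw [gaussianReal_of_var_ne_zero μ hv, setIntegral_withDensity_eq_setIntegral_toReal_smul
    (measurable_gaussianPDF μ v) (ae_of_all _ fun _ => gaussianPDF_lt_top) f hs]
  simp only [toReal_gaussianPDF, smul_eq_mul]

lemma map_pi_gaussianReal_sum_mul {ι : Type*} [Fintype ι] (c : ι → ℝ) :
    (Measure.pi fun _ : ι => gaussianReal 0 1).map (fun a => ∑ i, a i * c i)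
      = gaussianReal 0 (∑ i, c i ^ 2).toNNReal := by
  set L : StrongDual ℝ (EuclideanSpace ℝ ι) := innerSL ℝ (WithLp.toLp 2 c)
  have hL : (fun a : ι → ℝ => ∑ i, a i * c i) = L ∘ WithLp.toLp 2 := by
    ext a
    simp [L, PiLp.inner_apply, mul_comm]
  rw [hL, ← Measure.map_map L.continuous.measurable (by fun_prop), map_pi_eq_stdGaussian,
    IsGaussian.map_eq_gaussianReal, integral_strongDual_stdGaussian, variance_dual_stdGaussian,
    innerSL_apply_norm, EuclideanSpace.real_norm_sq_eq]

lemma measureReal_Ioc_neg_self_stdNormal {ρ : ℝ} (hρ : 0 ≤ ρ) :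
    (gaussianReal 0 1).real (Ioc (-ρ) ρ) = 1 - 2 * stdNormalCDF (-ρ) := by
  have := nullSingletonClass_gaussianReal (μ := 0) one_ne_zero
  have hsymm : (gaussianReal 0 1).real (Ioi ρ) = stdNormalCDF (-ρ) := by
    rw [stdNormalCDF, ← measure_congr Iio_ae_eq_Iic, Measure.real]
    conv_lhs => rw [← neg_zero, ← gaussianReal_map_neg]
    rw [Measure.map_apply measurable_neg measurableSet_Ioi, neg_preimage, neg_Ioi]
  rw [← Iic_sdiff_Iic, measureReal_sdiff (Iic_subset_Iic.2 (by linarith)) measurableSet_Iic,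
    ← compl_Ioi, probReal_compl_eq_one_sub measurableSet_Ioi, hsymm]
  change 1 - stdNormalCDF (-ρ) - stdNormalCDF (-ρ) = _
  ring

lemma setIntegral_Ioc_neg_self_abs_stdNormal {ρ : ℝ} (hρ : 0 ≤ ρ) :
    ∫ z in Ioc (-ρ) ρ, |z| ∂gaussianReal 0 1
      = 2 * (gaussianPDFReal 0 1 0 - gaussianPDFReal 0 1 ρ) := by
  set φ := gaussianPDFReal 0 1
  have hcont : Continuous fun z => φ z * |z| := (continuous_gaussianPDFReal 0 1).mul continuous_abs
  have hright : ∫ z in (0 : ℝ)..ρ, φ z * |z| = φ 0 - φ ρ := by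
    rw [intervalIntegral.integral_congr (g := fun z => (z - 0) * φ z) fun z hz => by
      simp [abs_of_nonneg (uIcc_of_le hρ ▸ hz).1, mul_comm],
      integral_sub_mul_gaussianPDFReal 0 one_ne_zero, NNReal.coe_one, one_mul]
  have hleft : ∫ z in (-ρ)..0, φ z * |z| = φ 0 - φ ρ := by
    rw [← hright, ← neg_zero, ← intervalIntegral.integral_comp_neg]
    simp [φ, gaussianPDFReal_zero_neg]
  rw [setIntegral_gaussianReal_eq_setIntegral_mul 0 one_ne_zero _ measurableSet_Ioc,
    ← intervalIntegral.integral_of_le (by linarith),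
    ← intervalIntegral.integral_add_adjacent_intervals (b := 0) (hcont.intervalIntegrable _ _)
      (hcont.intervalIntegrable _ _), hleft, hright]
  ring

lemma collisionProb_div_one (r θ : ℝ) : collisionProb (r / θ) 1 = collisionProb r θ := by
  rcases eq_or_ne θ 0 with rfl | hθ
  · simp [collisionProb]
  · simp only [collisionProb, div_one, div_pow, one_pow, mul_one]
    field_simp

lemma lintegral_ofReal_one_sub_abs_div_stdNormal {ρ : ℝ} (hρ : 0 < ρ) :
    ∫⁻ z, ENNReal.ofReal (1 - |z| / ρ) ∂gaussianReal 0 1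
      = ENNReal.ofReal (collisionProb ρ 1) := by
  have hsupp :
      Function.support (fun z : ℝ => ENNReal.ofReal (1 - |z| / ρ)) ⊆ Ioc (-ρ) ρ := by
    intro z hz
    have : |z| < ρ := by
      simpa [ENNReal.ofReal_eq_zero, sub_nonpos, le_div_iff₀ hρ] using hz
    exact Ioo_subset_Ioc_self (abs_lt.1 this)
  have hint :
      ∀ f : ℝ → ℝ, Continuous f → IntegrableOn f (Ioc (-ρ) ρ) (gaussianReal 0 1) :=
    fun f hf => hf.integrableOn_Icc.mono_set Ioc_subset_Icc_self
  rw [← setLIntegral_eq_of_support_subset hsupp, ← ofReal_integral_eq_lintegral_ofReal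
    (hint _ (by fun_prop)) (ae_restrict_of_forall_mem measurableSet_Ioc fun z hz => ?_),
    integral_sub (hint _ continuous_const) (hint _ (by fun_prop)), setIntegral_const, smul_eq_mul,
    mul_one, integral_div, setIntegral_Ioc_neg_self_abs_stdNormal hρ.le,
    measureReal_Ioc_neg_self_stdNormal hρ.le]
  · simp only [collisionProb, gaussianPDFReal_def]
    congr 1
    norm_num
    field_simp
  · rw [Pi.zero_apply, sub_nonneg, div_le_one hρ]
    exact abs_le.2 ⟨hz.1.le, hz.2⟩

lemma lintegral_ofReal_one_sub_abs_div_gaussianReal {r θ : ℝ} (hr : 0 < r) (hθ : 0 < θ) :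
    ∫⁻ t, ENNReal.ofReal (1 - |t| / r) ∂gaussianReal 0 (θ ^ 2).toNNReal
      = ENNReal.ofReal (collisionProb r θ) := by
  have hscale : gaussianReal 0 (θ ^ 2).toNNReal = (gaussianReal 0 1).map (θ * ·) := by
    rw [gaussianReal_map_const_mul, mul_zero, mul_one, Real.toNNReal_of_nonneg (sq_nonneg θ)]
  have hdiv : ∀ z, |θ * z| / r = |z| / (r / θ) := fun z => by
    rw [abs_mul, abs_of_pos hθ, div_div_eq_mul_div]
    ring
  rw [hscale, lintegral_map (by fun_prop) (measurable_const_mul θ)]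
  simp only [hdiv]
  rw [lintegral_ofReal_one_sub_abs_div_stdNormal (div_pos hr hθ), collisionProb_div_one]

lemma setOf_floor_div_eq_floor_add_div_inter_Ico {r t : ℝ} (hr : 0 < r) (ht : 0 ≤ t) :
    {s : ℝ | ⌊s / r⌋ = ⌊(s + t) / r⌋} ∩ Ico 0 r = Ico 0 (r - t) := by
  ext s
  simp only [mem_inter_iff, mem_ofPred_eq, mem_Ico]
  constructor
  · rintro ⟨hfloor, hs0, hsr⟩
    have h0 : ⌊s / r⌋ = 0 := Int.floor_eq_zero_iff.2 ⟨by positivity, (div_lt_one hr).2 hsr⟩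
    have := Int.floor_eq_zero_iff.1 (hfloor ▸ h0)
    exact ⟨hs0, by linarith [(div_lt_one hr).1 this.2]⟩
  · rintro ⟨hs0, hst⟩
    have h1 : ⌊s / r⌋ = 0 :=
      Int.floor_eq_zero_iff.2 ⟨by positivity, (div_lt_one hr).2 (by linarith)⟩
    have h2 : ⌊(s + t) / r⌋ = 0 :=
      Int.floor_eq_zero_iff.2 ⟨by positivity, (div_lt_one hr).2 (by linarith)⟩
    exact ⟨h1.trans h2.symm, hs0, by linarith⟩

lemma volume_setOf_floor_div_eq_floor_add_div_inter_Ioc {r t : ℝ} (hr : 0 < r) (ht : 0 ≤ t)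
    (u : ℝ) :
    volume ({s : ℝ | ⌊s / r⌋ = ⌊(s + t) / r⌋} ∩ Ioc u (u + r))
      = ENNReal.ofReal (r - t) := by
  set A := {s : ℝ | ⌊s / r⌋ = ⌊(s + t) / r⌋}
  have hA : ∀ g : AddSubgroup.zmultiples r, (g +ᵥ ·) ⁻¹' A = A := by
    rintro ⟨_, k, rfl⟩
    ext s
    simp [A, vadd_eq_add, add_div, add_assoc, hr.ne']
  have hIoc_Ico : volume (A ∩ Ioc 0 r) = volume (A ∩ Ico 0 r) :=
    measure_congr (ae_eq_set_inter (ae_eq_refl A) (Ioc_ae_eq_Icc.trans Ico_ae_eq_Icc.symm))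
  -- `A` is `r`-periodic, so it has the same measure in every period `(u, u + r]`.
  rw [(isAddFundamentalDomain_Ioc hr u volume).measure_set_eq
      (isAddFundamentalDomain_Ioc hr 0 volume) (measurableSet_eq_fun (by fun_prop) (by fun_prop))
      hA, zero_add, hIoc_Ico, setOf_floor_div_eq_floor_add_div_inter_Ico hr ht, volume_Ico,
    sub_zero]

lemma cond_Icc_setOf_floor_add_div_eq {r : ℝ} (hr : 0 < r) (u v : ℝ) :
    cond volume (Icc 0 r) {b : ℝ | ⌊(u + b) / r⌋ = ⌊(v + b) / r⌋}
      = ENNReal.ofReal (1 - |u - v| / r) := by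
  wlog huv : u ≤ v generalizing u v
  · simpa only [eq_comm, abs_sub_comm] using this v u (le_of_not_ge huv)
  have hshift : {b : ℝ | ⌊(u + b) / r⌋ = ⌊(v + b) / r⌋} ∩ Ioc 0 r
      = (u + ·) ⁻¹' ({s : ℝ | ⌊s / r⌋ = ⌊(s + (v - u)) / r⌋} ∩ Ioc u (u + r)) := by
    ext b
    simp only [mem_inter_iff, mem_ofPred_eq, mem_preimage, mem_Ioc]
    constructor <;> rintro ⟨h, _, _⟩ <;>
      exact ⟨by convert h using 3; ring, by linarith, by linarith⟩
  have hIcc_Ioc : (Icc 0 r ∩ {b : ℝ | ⌊(u + b) / r⌋ = ⌊(v + b) / r⌋} : Set ℝ)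
      =ᵐ[volume] ({b : ℝ | ⌊(u + b) / r⌋ = ⌊(v + b) / r⌋} ∩ Ioc 0 r : Set ℝ) := by
    rw [inter_comm]
    exact ae_eq_set_inter (ae_eq_refl _) Ioc_ae_eq_Icc.symm
  rw [cond_apply measurableSet_Icc, measure_congr hIcc_Ioc, hshift, measure_preimage_add,
    volume_setOf_floor_div_eq_floor_add_div_inter_Ioc hr (sub_nonneg.2 huv), volume_Icc, sub_zero,
    ← ENNReal.ofReal_inv_of_pos hr, ← ENNReal.ofReal_mul (by positivity), abs_sub_comm,
    abs_of_nonneg (sub_nonneg.2 huv)]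
  congr 1
  field_simp

/-- Collision probability of a p-stable LSH hash: for `a` with i.i.d. standard
Gaussian entries and `b` uniform on `[0, r]`, independent of `a`, the
probability that `⌊(a·x + b)/r⌋ = ⌊(a·y + b)/r⌋` equals `ε(θ)` with
`θ = ‖x − y‖₂`. -/
theorem pstable_lsh_collision_probability (n : ℕ) (x y : Fin n → ℝ) (hxy : x ≠ y)
    (r : ℝ) (hr : 0 < r) (θ : ℝ) (hθ : θ = Real.sqrt (∑ i, (x i - y i) ^ 2)) :
    ((Measure.pi fun _ : Fin n => gaussianReal 0 1).prod
        (ProbabilityTheory.cond volume (Set.Icc (0 : ℝ) r)))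
      {p : (Fin n → ℝ) × ℝ |
        ⌊(∑ i, p.1 i * x i + p.2) / r⌋ = ⌊(∑ i, p.1 i * y i + p.2) / r⌋}
      = ENNReal.ofReal (collisionProb r θ) := by
  have hsq : θ ^ 2 = ∑ i, (x i - y i) ^ 2 := by rw [hθ, sq_sqrt (by positivity)]
  have hθ_pos : 0 < θ := by
    obtain ⟨i, hi⟩ := Function.ne_iff.1 hxy
    rw [hθ, sqrt_pos]
    exact Finset.sum_pos' (fun j _ => sq_nonneg _)
      ⟨i, Finset.mem_univ i, sq_pos_of_ne_zero (sub_ne_zero.2 hi)⟩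
  have hfiber : ∀ a : Fin n → ℝ,
      cond volume (Icc 0 r)
          {b | ⌊(∑ i, a i * x i + b) / r⌋ = ⌊(∑ i, a i * y i + b) / r⌋}
        = ENNReal.ofReal (1 - |∑ i, a i * (x i - y i)| / r) := fun a => by
    rw [cond_Icc_setOf_floor_add_div_eq hr, ← Finset.sum_sub_distrib]
    simp only [mul_sub]
  rw [Measure.prod_apply (measurableSet_eq_fun (by fun_prop) (by fun_prop))]
  simp only [preimage_ofPred_eq, hfiber]
  rw [← lintegral_map (f := fun t => ENNReal.ofReal (1 - |t| / r)) (by fun_prop) (by fun_prop),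
    map_pi_gaussianReal_sum_mul, ← hsq, lintegral_ofReal_one_sub_abs_div_gaussianReal hr hθ_pos]
end
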